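/- For an odd integer n, the b-number of the star K_{1,n-1} (one center with n-1 leaves) satisfies b(K_{1,n-1}) = (-1)^{(n+1)/2} · A_{n-1}, where A_k is the k-th Euler zigzag number. -/

import Mathlib

open scoped Classical

/-- A graph is *even* if every connected component has an even number of vertices. -/
def SimpleGraph.IsEvenGraph {V : Type*} (G : SimpleGraph V) : Prop :=
  ∀ c : G.ConnectedComponent, Even (Nat.card c.supp)

/-- A graph is *odd* if every connected component has an odd number of vertices. -/
def SimpleGraph.IsOddGraph {V : Type*} (G : SimpleGraph V) : Prop :=
  ∀ c : G.ConnectedComponent, Odd (Nat.card c.supp)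

/-- The number of connected components of a graph. -/
noncomputable def SimpleGraph.kappa {V : Type*} (G : SimpleGraph V) : ℕ :=
  Nat.card G.ConnectedComponent

/-- The `a`-number of the induced subgraph `G[s]`, defined recursively:
`1` for the null graph, `0` if `G[s]` is not even, and minus the sum of the
`a`-numbers of all proper induced subgraphs otherwise. -/
noncomputable def aNum {V : Type*} (G : SimpleGraph V) (s : Finset V) : ℤ :=
  if s = ∅ then 1
  else if (G.induce (s : Set V)).IsEvenGraph then
    - ∑ t ∈ (s.powerset.filter (· ≠ s)).attach, aNum G t.1
  else 0
termination_by s.card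
decreasing_by
  have h := t.2
  simp only [Finset.mem_filter, Finset.mem_powerset] at h
  exact Finset.card_lt_card (lt_of_le_of_ne h.1 h.2)

/-- The `b`-number of the induced subgraph `G[s]`, defined recursively:
`1` for the null graph, `0` if `G[s]` is not odd, and minus the sum of the
`b`-numbers of all proper induced subgraphs otherwise. -/
noncomputable def bNum {V : Type*} (G : SimpleGraph V) (s : Finset V) : ℤ :=
  if s = ∅ then 1
  else if (G.induce (s : Set V)).IsOddGraph then
    - ∑ t ∈ (s.powerset.filter (· ≠ s)).attach, bNum G t.1
  else 0
termination_by s.card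
decreasing_by
  have h := t.2
  simp only [Finset.mem_filter, Finset.mem_powerset] at h
  exact Finset.card_lt_card (lt_of_le_of_ne h.1 h.2)

/-- The `a`-number of a finite graph `G`. -/
noncomputable def aNumber {V : Type*} [Fintype V] (G : SimpleGraph V) : ℤ :=
  aNum G Finset.univ

/-- The `b`-number of a finite graph `G`. -/
noncomputable def bNumber {V : Type*} [Fintype V] (G : SimpleGraph V) : ℤ :=
  bNum G Finset.univ

/-- The `k`-th Euler zigzag number `A_k`: the number of alternating (up-down)
permutations of `Fin k`, whose exponential generating function is
`sec x + tan x`. -/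
noncomputable def eulerZigzag (k : ℕ) : ℕ :=
  Nat.card {σ : Equiv.Perm (Fin k) //
    ∀ i : ℕ, ∀ h : i + 1 < k,
      if i % 2 = 0 then σ ⟨i, Nat.lt_of_succ_lt h⟩ < σ ⟨i + 1, h⟩
      else σ ⟨i + 1, h⟩ < σ ⟨i, Nat.lt_of_succ_lt h⟩}


namespace StarB
open Finset

variable {α : Type*} [LinearOrder α]

/-- Alternating list predicate; `b = true` means the next comparison is an ascent. -/
def Alt : Bool → List α → Prop
  | _, [] => True
  | _, [_] => True
  | b, x :: y :: l => (if b then x < y else y < x) ∧ Alt (!b) (y :: l)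

lemma alt_nil (b : Bool) : Alt b ([] : List α) := trivial
lemma alt_singleton (b : Bool) (x : α) : Alt b [x] := trivial
lemma alt_cons_cons {b : Bool} {x y : α} {l : List α} :
    Alt b (x :: y :: l) ↔ (if b then x < y else y < x) ∧ Alt (!b) (y :: l) := Iff.rfl

lemma alt_of_alt_cons {b : Bool} {x : α} {l : List α} (h : Alt b (x :: l)) : Alt (!b) l := by
  cases l with
  | nil => trivial
  | cons y t => exact h.2

lemma alt_iff_get (l : List α) : ∀ b : Bool, Alt b l ↔ ∀ i (h : i + 1 < l.length),
    if b = decide (i % 2 = 0) then l.get ⟨i, Nat.lt_of_succ_lt h⟩ < l.get ⟨i + 1, h⟩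
    else l.get ⟨i + 1, h⟩ < l.get ⟨i, Nat.lt_of_succ_lt h⟩ := by
  induction l with
  | nil => intro b; simp [Alt]
  | cons x l ih =>
    intro b
    cases l with
    | nil => simp [Alt]
    | cons y t =>
      rw [alt_cons_cons, ih (!b)]
      constructor
      · rintro ⟨h0, hrest⟩ i hi
        cases i with
        | zero => simpa using h0
        | succ j =>
          have hj : j + 1 < (y :: t).length := by
            simpa [Nat.succ_lt_succ_iff] using hi
          have := hrest j hj
          rcases Nat.even_or_odd j with he | ho
          · have h1 : j % 2 = 0 := Nat.even_iff.mp he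
            have h2 : (j+1) % 2 = 1 := by omega
            cases b <;> simp [h1, h2] at this ⊢ <;> exact this
          · have h1 : j % 2 = 1 := Nat.odd_iff.mp ho
            have h2 : (j+1) % 2 = 0 := by omega
            cases b <;> simp [h1, h2] at this ⊢ <;> exact this
      · intro h
        refine ⟨by simpa using h 0 (by simpa using Nat.succ_lt_succ (Nat.succ_pos _)), ?_⟩
        intro j hj
        have hi : (j + 1) + 1 < (x :: y :: t).length := by
          simpa [Nat.succ_lt_succ_iff] using hj
        have := h (j+1) hi
        rcases Nat.even_or_odd j with he | ho
        · have h1 : j % 2 = 0 := Nat.even_iff.mp he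
          have h2 : (j+1) % 2 = 1 := by omega
          cases b <;> simp [h1, h2] at this ⊢ <;> exact this
        · have h1 : j % 2 = 1 := Nat.odd_iff.mp ho
          have h2 : (j+1) % 2 = 0 := by omega
          cases b <;> simp [h1, h2] at this ⊢ <;> exact this


lemma alt_ofFn_iff {M t : ℕ} (f : Fin t → Fin M) :
    Alt true (List.ofFn f) ↔ ∀ i (h : i + 1 < t),
      if i % 2 = 0 then f ⟨i, Nat.lt_of_succ_lt h⟩ < f ⟨i + 1, h⟩
      else f ⟨i + 1, h⟩ < f ⟨i, Nat.lt_of_succ_lt h⟩ := by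
  rw [alt_iff_get]
  constructor
  · intro H i h
    have h' : i + 1 < (List.ofFn f).length := by simpa using h
    have := H i h'
    by_cases hp : i % 2 = 0 <;>
      simp [hp, List.get_ofFn, Fin.cast] at this ⊢ <;> exact this
  · intro H i h'
    have h : i + 1 < t := by simpa using h'
    have := H i h
    by_cases hp : i % 2 = 0 <;>
      simp [hp, List.get_ofFn, Fin.cast] at this ⊢ <;> exact this

lemma card_altLists {M : ℕ} (T : Finset (Fin M)) :
    ((Finset.univ : Finset {l : List (Fin M) // l.Nodup}).filter
      (fun w => w.1.toFinset = T ∧ Alt true w.1)).card = eulerZigzag T.card := by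
  classical
  rw [← Fintype.card_subtype, ← Nat.card_eq_fintype_card, eulerZigzag]
  refine (Nat.card_congr (Equiv.ofBijective ?_ ?_)).symm
  · -- the map from alternating permutations to alternating lists
    refine fun σ => ⟨⟨List.ofFn (fun i => ((T.orderIsoOfFin rfl) (σ.1 i) : Fin M)), ?_⟩, ?_, ?_⟩
    · refine List.nodup_ofFn.mpr ?_
      intro a b hab
      exact σ.1.injective ((T.orderIsoOfFin rfl).injective (Subtype.ext hab))
    · ext x
      simp only [List.mem_toFinset, List.mem_ofFn, Set.mem_range]
      constructor
      · rintro ⟨i, rfl⟩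
        exact ((T.orderIsoOfFin rfl) (σ.1 i)).2
      · intro hx
        exact ⟨σ.1.symm ((T.orderIsoOfFin rfl).symm ⟨x, hx⟩), by simp⟩
    · rw [alt_ofFn_iff]
      intro i h
      have := σ.2 i h
      by_cases hp : i % 2 = 0 <;> simp [hp] at this ⊢ <;> exact this
  · constructor
    · intro σ1 σ2 hσ
      apply Subtype.ext
      apply Equiv.ext
      intro i
      have := congrArg (fun w => w.1.1) hσ
      simp only at this
      have h2 := List.ofFn_inj.mp this
      have := congrFun h2 i
      exact (T.orderIsoOfFin rfl).injective (Subtype.ext this)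
    · rintro ⟨⟨l, hnd⟩, htf, halt⟩
      have htf' : l.toFinset = T := htf
      have hlen : l.length = T.card := by
        rw [← htf']; exact (List.toFinset_card_of_nodup hnd).symm
      set e := T.orderIsoOfFin rfl with he
      have hgetmem : ∀ i : Fin T.card, l.get (Fin.cast hlen.symm i) ∈ T := by
        intro i
        have hm : l.get (Fin.cast hlen.symm i) ∈ l.toFinset :=
          List.mem_toFinset.mpr (l.get_mem _)
        rwa [htf'] at hm
      let g : Fin T.card → {x // x ∈ T} := fun i => ⟨l.get (Fin.cast hlen.symm i), hgetmem i⟩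
      have hginj : Function.Injective g := by
        intro a b hab
        have hv : l.get (Fin.cast hlen.symm a) = l.get (Fin.cast hlen.symm b) :=
          congrArg Subtype.val hab
        have h3 := (List.nodup_iff_injective_get.mp hnd) hv
        simpa [Fin.ext_iff] using h3
      have hgbij : Function.Bijective g :=
        (Fintype.bijective_iff_injective_and_card g).mpr ⟨hginj, by simp⟩
      let ge := Equiv.ofBijective g hgbij
      let σ : Equiv.Perm (Fin T.card) := ge.trans e.toEquiv.symm
      have hkey : ∀ i, (e (σ i) : Fin M) = l.get (Fin.cast hlen.symm i) := by
        intro i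
        simp [σ, ge, g]
      have hzig : ∀ i : ℕ, ∀ h : i + 1 < T.card,
          if i % 2 = 0 then σ ⟨i, Nat.lt_of_succ_lt h⟩ < σ ⟨i + 1, h⟩
          else σ ⟨i + 1, h⟩ < σ ⟨i, Nat.lt_of_succ_lt h⟩ := by
        intro i h
        have h' : i + 1 < l.length := by omega
        have := (alt_iff_get l true).mp halt i h'
        by_cases hp : i % 2 = 0 <;> simp [hp] at this ⊢
        · rw [← e.lt_iff_lt, ← Subtype.coe_lt_coe, hkey, hkey]
          convert this using 2 <;> simp [Fin.cast]
        · rw [← e.lt_iff_lt, ← Subtype.coe_lt_coe, hkey, hkey]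
          convert this using 2 <;> simp [Fin.cast]
      refine ⟨⟨σ, hzig⟩, ?_⟩
      apply Subtype.ext
      apply Subtype.ext
      simp only
      apply List.ext_get
      · simp [hlen]
      · intro i h1 h2
        rw [List.get_ofFn]
        rw [hkey]
        congr 1


variable {M : ℕ}

/-- The invariant for states of the involution. -/
def Good (S : Finset (Fin M)) (l : List (Fin M)) : Prop :=
  Even S.card ∧ l.Nodup ∧ l.toFinset = Sᶜ ∧ Alt true l

noncomputable def grow (S : Finset (Fin M)) (l : List (Fin M)) : Finset (Fin M) × List (Fin M) :=
  if h1 : S.Nonempty then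
    if h2 : (S.erase (S.max' h1)).Nonempty then
      (((S.erase (S.max' h1)).erase ((S.erase (S.max' h1)).max' h2)),
        (S.erase (S.max' h1)).max' h2 :: S.max' h1 :: l)
    else (S, l)
  else (S, l)

noncomputable def gmap : Finset (Fin M) → List (Fin M) → Finset (Fin M) × List (Fin M)
  | S, a :: b :: t => if ∀ s ∈ S, s < a then (insert a (insert b S), t) else grow S (a :: b :: t)
  | S, l => grow S l

lemma gmap_nil (S : Finset (Fin M)) : gmap S [] = grow S [] := rfl
lemma gmap_single (S : Finset (Fin M)) (a : Fin M) : gmap S [a] = grow S [a] := rfl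
lemma gmap_cons_cons (S : Finset (Fin M)) (a b : Fin M) (t : List (Fin M)) :
    gmap S (a :: b :: t) =
      if ∀ s ∈ S, s < a then (insert a (insert b S), t) else grow S (a :: b :: t) := rfl

lemma grow_eval {S : Finset (Fin M)} {a b : Fin M} (l : List (Fin M))
    (ha : a ∈ S) (hb : b ∈ S) (hab : a < b)
    (hmax : ∀ s ∈ S, s ≠ a → s ≠ b → s < a) :
    grow S l = ((S.erase b).erase a, a :: b :: l) := by
  have h1 : S.Nonempty := ⟨b, hb⟩
  have hbmax : S.max' h1 = b := by
    refine le_antisymm (Finset.max'_le _ _ _ ?_) (Finset.le_max' _ _ hb)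
    intro s hs
    by_cases hsa : s = a
    · exact hsa ▸ hab.le
    by_cases hsb : s = b
    · exact hsb ▸ le_rfl
    · exact ((hmax s hs hsa hsb).trans hab).le
  have h2 : (S.erase b).Nonempty := ⟨a, Finset.mem_erase.mpr ⟨hab.ne, ha⟩⟩
  have hamax : (S.erase b).max' h2 = a := by
    refine le_antisymm (Finset.max'_le _ _ _ ?_)
      (Finset.le_max' _ _ (Finset.mem_erase.mpr ⟨hab.ne, ha⟩))
    intro s hs
    rcases Finset.mem_erase.mp hs with ⟨hsb, hsS⟩
    by_cases hsa : s = a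
    · exact hsa ▸ le_rfl
    · exact (hmax s hsS hsa hsb).le
  rw [grow, dif_pos h1]
  simp only [hbmax]
  rw [dif_pos h2]
  simp only [hamax]

lemma good_mem_iff {S : Finset (Fin M)} {l : List (Fin M)} (h : Good S l) :
    ∀ x, x ∈ l ↔ x ∉ S := by
  intro x
  rw [← List.mem_toFinset, h.2.2.1, Finset.mem_compl]

lemma good_length {S : Finset (Fin M)} {l : List (Fin M)} (h : Good S l) :
    l.length = M - S.card := by
  have := congrArg Finset.card h.2.2.1
  rwa [List.toFinset_card_of_nodup h.2.1, Finset.card_compl, Fintype.card_fin] at this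

lemma good_even_length (hME : Even M) {S : Finset (Fin M)} {l : List (Fin M)} (h : Good S l) :
    Even l.length := by
  have h1 := good_length h
  have h2 : S.card ≤ M := by
    simpa using Finset.card_le_card (Finset.subset_univ S)
  rcases hME with ⟨m, hm⟩
  rcases h.1 with ⟨c, hc⟩
  refine ⟨m - c, by omega⟩

/-- Main spec of the involution map. -/
lemma gmap_spec (hME : Even M) (hM2 : 2 ≤ M) {S : Finset (Fin M)} {l : List (Fin M)}
    (h : Good S l) :
    Good (gmap S l).1 (gmap S l).2 ∧
    ((gmap S l).1.card = S.card + 2 ∨ S.card = (gmap S l).1.card + 2) ∧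
    gmap (gmap S l).1 (gmap S l).2 = (S, l) := by
  classical
  -- the "grow" situation, handled uniformly
  have growcase : ∀ l' : List (Fin M), Good S l' →
      (∀ c t, l' = c :: t → ∃ s ∈ S, c < s) →
      (gmap S l' = grow S l') →
      Good (grow S l').1 (grow S l').2 ∧
      ((grow S l').1.card = S.card + 2 ∨ S.card = (grow S l').1.card + 2) ∧
      gmap (grow S l').1 (grow S l').2 = (S, l') := by
    intro l' hg hhead hgm
    -- S has at least two elements
    have hScard : 2 ≤ S.card := by
      have hne : S.Nonempty := by
        rcases l' with _ | ⟨c, t⟩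
        · -- l' = [], so S = univ
          have : (univ : Finset (Fin M)).card = M := by simp
          have hl := good_length hg
          simp at hl
          -- l'.length = 0 so M - S.card = 0, S.card ≤ M
          have hc : S.card ≤ M := by simpa using Finset.card_le_card (Finset.subset_univ S)
          have : S.card = M := by omega
          exact Finset.card_pos.mp (by omega)
        · rcases hhead c t rfl with ⟨s, hs, -⟩
          exact ⟨s, hs⟩
      rcases hg.1 with ⟨c, hc⟩
      have := Finset.card_pos.mpr hne
      omega
    have h1 : S.Nonempty := Finset.card_pos.mp (by omega)
    set b := S.max' h1 with hbdef
    have hbS : b ∈ S := S.max'_mem h1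
    have h2 : (S.erase b).Nonempty := by
      rw [← Finset.card_pos, Finset.card_erase_of_mem hbS]; omega
    set a := (S.erase b).max' h2 with hadef
    have haSe : a ∈ S.erase b := Finset.max'_mem _ h2
    have haS : a ∈ S := (Finset.mem_erase.mp haSe).2
    have hanb : a ≠ b := (Finset.mem_erase.mp haSe).1
    have hab : a < b := lt_of_le_of_ne (Finset.le_max' _ _ haS) hanb
    have hmax : ∀ s ∈ S, s ≠ a → s ≠ b → s < a := by
      intro s hs hsa hsb
      exact lt_of_le_of_ne (Finset.le_max' _ _ (Finset.mem_erase.mpr ⟨hsb, hs⟩)) hsa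
    have heval : grow S l' = ((S.erase b).erase a, a :: b :: l') :=
      grow_eval l' haS hbS hab hmax
    have hanl : a ∉ l' := by rw [good_mem_iff hg]; simp [haS]
    have hbnl : b ∉ l' := by rw [good_mem_iff hg]; simp [hbS]
    have hcard : ((S.erase b).erase a).card = S.card - 2 := by
      rw [Finset.card_erase_of_mem (Finset.mem_erase.mpr ⟨hanb, haS⟩),
        Finset.card_erase_of_mem hbS]
      omega
    have hgood : Good ((S.erase b).erase a) (a :: b :: l') := by
      refine ⟨?_, ?_, ?_, ?_⟩
      · rcases hg.1 with ⟨c, hc⟩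
        rw [hcard]
        exact ⟨c - 1, by omega⟩
      · simp only [List.nodup_cons]
        exact ⟨by simp [hanb, hanl], by simp [hbnl], hg.2.1⟩
      · ext x
        by_cases hxa : x = a
        · subst hxa; simp [haS]
        by_cases hxb : x = b
        · subst hxb; simp [hbS, hanb]
        · have hxmem : x ∈ l' ↔ x ∉ S := good_mem_iff hg x
          simp [hxa, hxb, hxmem]
      · rw [alt_cons_cons]
        refine ⟨by simpa using hab, ?_⟩
        rcases l' with _ | ⟨c, t⟩
        · trivial
        · rw [alt_cons_cons]
          rcases hhead c t rfl with ⟨s, hs, hcs⟩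
          have : c < b := lt_of_lt_of_le hcs (Finset.le_max' _ _ hs)
          exact ⟨by simpa using this, by simpa using hg.2.2.2⟩
    refine ⟨by rw [heval]; exact hgood, by rw [heval]; right; simp only; omega, ?_⟩
    -- applying gmap again shrinks back
    rw [heval]
    show gmap ((S.erase b).erase a) (a :: b :: l') = (S, l')
    rw [gmap_cons_cons, if_pos]
    · congr 1
      rw [Finset.erase_right_comm]
      rw [Finset.insert_erase (Finset.mem_erase.mpr ⟨hanb.symm, hbS⟩)]
      rw [Finset.insert_erase haS]
    · intro s hs
      rcases Finset.mem_erase.mp hs with ⟨hsa, hs'⟩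
      rcases Finset.mem_erase.mp hs' with ⟨hsb, hsS⟩
      exact hmax s hsS hsa hsb
  rcases l with _ | ⟨a, rest⟩
  · -- l = []
    exact growcase [] h (by intro c t ht; cases ht) rfl
  rcases rest with _ | ⟨b, t⟩
  · -- l = [a]: impossible, odd length
    exfalso
    have := good_even_length hME h
    simp at this
  by_cases hcond : ∀ s ∈ S, s < a
  · -- shrink case
    have hgm : gmap S (a :: b :: t) = (insert a (insert b S), t) := by
      rw [gmap_cons_cons, if_pos hcond]
    have hanS : a ∉ S := by
      have := (good_mem_iff h a).mp (by simp)
      exact this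
    have hbnS : b ∉ S := (good_mem_iff h b).mp (by simp)
    have hnd := h.2.1
    simp only [List.nodup_cons, List.mem_cons] at hnd
    have hab2 : a ≠ b := fun hh => hnd.1 (Or.inl hh)
    have hant : a ∉ t := fun hh => hnd.1 (Or.inr hh)
    have hbnt : b ∉ t := hnd.2.1
    have hndt : t.Nodup := hnd.2.2
    have haltab : (if true = true then a < b else b < a) ∧ Alt false (b :: t) := h.2.2.2
    have hab : a < b := by simpa using haltab.1
    set S' := insert a (insert b S) with hS'
    have hcardS' : S'.card = S.card + 2 := by
      rw [hS', Finset.card_insert_of_notMem (by simp [hanS, hab2]),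
        Finset.card_insert_of_notMem hbnS]
    have hgood' : Good S' t := by
      refine ⟨?_, hndt, ?_, ?_⟩
      · rcases h.1 with ⟨c, hc⟩
        rw [hcardS']
        exact ⟨c + 1, by omega⟩
      · ext x
        by_cases hxa : x = a
        · subst hxa; simp [hS', hant]
        by_cases hxb : x = b
        · subst hxb; simp [hS', hbnt]
        · have hxmem : x ∈ a :: b :: t ↔ x ∉ S := good_mem_iff h x
          simp only [List.mem_cons, hxa, hxb, false_or] at hxmem
          simp [hS', hxa, hxb, hxmem]
      · have := alt_of_alt_cons haltab.2
        simpa using this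
    have haltt : Alt true t := by
      have := alt_of_alt_cons haltab.2
      simpa using this
    refine ⟨by rw [hgm]; exact hgood', by rw [hgm]; left; simpa using hcardS', ?_⟩
    rw [hgm]
    show gmap S' t = (S, a :: b :: t)
    -- now t's head (if any) is less than b ∈ S', so we are in the grow case
    have hgm2 : gmap S' t = grow S' t := by
      rcases t with _ | ⟨c, t'⟩
      · rfl
      rcases t' with _ | ⟨d, t''⟩
      · rfl
      · rw [gmap_cons_cons, if_neg]
        push_neg
        refine ⟨b, by simp [hS'], ?_⟩
        have : (if false = true then b < c else c < b) ∧ Alt true (c :: d :: t'') := haltab.2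
        have hcb : c < b := by simpa using this.1
        exact le_of_lt hcb
    rw [hgm2]
    have heval2 : grow S' t = ((S'.erase b).erase a, a :: b :: t) := by
      refine grow_eval t (by simp [hS']) (by simp [hS']) hab ?_
      intro s hs hsa hsb
      rcases Finset.mem_insert.mp hs with rfl | hs'
      · exact absurd rfl hsa
      rcases Finset.mem_insert.mp hs' with rfl | hs''
      · exact absurd rfl hsb
      · exact hcond s hs''
    rw [heval2]
    congr 1
    rw [hS', Finset.erase_insert_of_ne hab2, Finset.erase_insert hbnS,
      Finset.erase_insert hanS]
  · -- grow case with a nonempty list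
    have hgm : gmap S (a :: b :: t) = grow S (a :: b :: t) := by
      rw [gmap_cons_cons, if_neg hcond]
    have hhh : ∀ c t', (a :: b :: t) = c :: t' → ∃ s ∈ S, c < s := by
      intro c t' hct
      cases hct
      push_neg at hcond
      rcases hcond with ⟨s, hs, hsa⟩
      have hanS : a ∉ S := (good_mem_iff h a).mp (by simp)
      have : a < s := lt_of_le_of_ne hsa (fun hh => hanS (hh ▸ hs))
      exact ⟨s, hs, this⟩
    have hgc := growcase (a :: b :: t) h hhh hgm
    rw [hgm]
    exact hgc


lemma eulerZigzag_zero : eulerZigzag 0 = 1 := by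
  rw [eulerZigzag, Nat.card_eq_one_iff_unique]
  constructor
  · constructor
    intro a b
    apply Subtype.ext
    apply Equiv.ext
    intro i
    exact i.elim0
  · exact ⟨⟨1, by intro i h; omega⟩⟩

lemma zig_sum_zero (hM2 : 2 ≤ M) (hME : Even M) :
    ∑ j ∈ Finset.range (M / 2 + 1),
      (-1 : ℤ) ^ j * (M.choose (2 * j)) * eulerZigzag (M - 2 * j) = 0 := by
  classical
  set NL := {l : List (Fin M) // l.Nodup}
  set B : Finset (Finset (Fin M) × NL) :=
    Finset.univ.filter (fun p => Good p.1 p.2.1) with hB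
  have key : ∀ c : ℕ, (-1 : ℤ) ^ ((c + 2) / 2) = -(-1) ^ (c / 2) := by
    intro c
    have h : (c + 2) / 2 = c / 2 + 1 := by omega
    rw [h, pow_succ]; ring
  -- Step 1: the signed sum over B is zero, by the involution gmap.
  have hzero : ∑ p ∈ B, (-1 : ℤ) ^ (p.1.card / 2) = 0 := by
    refine Finset.sum_involution
      (fun p hp => ((gmap p.1 p.2.1).1,
        ⟨(gmap p.1 p.2.1).2,
          ((gmap_spec hME hM2 ((Finset.mem_filter.mp hp).2)).1).2.1⟩)) ?_ ?_ ?_ ?_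
    · intro p hp
      have hspec := gmap_spec hME hM2 ((Finset.mem_filter.mp hp).2)
      rcases hspec.2.1 with hc | hc
      · simp only [hc, key]; ring
      · simp only [hc, key]; ring
    · intro p hp hne heq
      have hspec := gmap_spec hME hM2 ((Finset.mem_filter.mp hp).2)
      have hfst : (gmap p.1 p.2.1).1 = p.1 := by
        simpa using congrArg Prod.fst heq
      rcases hspec.2.1 with hc | hc <;> rw [hfst] at hc <;> omega
    · intro p hp
      rw [Finset.mem_filter]
      exact ⟨Finset.mem_univ _, (gmap_spec hME hM2 ((Finset.mem_filter.mp hp).2)).1⟩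
    · intro p hp
      have hspec := gmap_spec hME hM2 ((Finset.mem_filter.mp hp).2)
      have h3 := hspec.2.2
      refine Prod.ext ?_ (Subtype.ext ?_)
      · simpa using congrArg Prod.fst h3
      · simpa using congrArg Prod.snd h3
  -- Step 2: compute the signed sum over B by fibers.
  rw [hB, Finset.sum_filter, Fintype.sum_prod_type] at hzero
  have inner : ∀ S : Finset (Fin M),
      (∑ w : NL, if Good S w.1 then ((-1 : ℤ) ^ (S.card / 2)) else 0) =
      (if Even S.card then (-1 : ℤ) ^ (S.card / 2) * eulerZigzag (M - S.card) else 0) := by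
    intro S
    by_cases hE : Even S.card
    · rw [if_pos hE]
      have hGiff : ∀ w : NL, Good S w.1 ↔ (w.1.toFinset = Sᶜ ∧ Alt true w.1) := by
        intro w
        constructor
        · rintro ⟨-, -, h3, h4⟩; exact ⟨h3, h4⟩
        · rintro ⟨h3, h4⟩; exact ⟨hE, w.2, h3, h4⟩
      have : (∑ w : NL, if Good S w.1 then ((-1 : ℤ) ^ (S.card / 2)) else 0) =
          ∑ w ∈ Finset.univ.filter (fun w : NL => w.1.toFinset = Sᶜ ∧ Alt true w.1),
            ((-1 : ℤ) ^ (S.card / 2)) := by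
        rw [Finset.sum_filter]
        refine Finset.sum_congr rfl fun w _ => ?_
        by_cases h : Good S w.1
        · rw [if_pos h, if_pos ((hGiff w).mp h)]
        · rw [if_neg h, if_neg (fun hc => h ((hGiff w).mpr hc))]
      rw [this, Finset.sum_const, card_altLists, nsmul_eq_mul]
      have hc : (Sᶜ : Finset (Fin M)).card = M - S.card := by
        rw [Finset.card_compl, Fintype.card_fin]
      rw [hc, mul_comm]
    · rw [if_neg hE]
      refine Finset.sum_eq_zero fun w _ => ?_
      rw [if_neg (fun hg => hE hg.1)]
  rw [Finset.sum_congr rfl (fun S _ => inner S)] at hzero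
  -- Step 3: group subsets by cardinality.
  have hgroup : (∑ S : Finset (Fin M),
      (if Even S.card then (-1 : ℤ) ^ (S.card / 2) * eulerZigzag (M - S.card) else 0)) =
      ∑ j ∈ Finset.range (M + 1), (M.choose j) •
        (if Even j then (-1 : ℤ) ^ (j / 2) * eulerZigzag (M - j) else 0) := by
    rw [← Finset.powerset_univ, Finset.sum_powerset]
    have hcu : (Finset.univ : Finset (Fin M)).card = M := by simp
    rw [hcu]
    refine Finset.sum_congr rfl fun j _ => ?_
    rw [Finset.sum_powersetCard j Finset.univ
      (fun c => if Even c then (-1 : ℤ) ^ (c / 2) * eulerZigzag (M - c) else 0)]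
    rw [hcu]
  rw [hgroup] at hzero
  -- Step 4: drop the odd indices.
  have himg : (Finset.range (M / 2 + 1)).image (fun i => 2 * i) ⊆ Finset.range (M + 1) := by
    intro x hx
    simp only [Finset.mem_image, Finset.mem_range] at hx ⊢
    rcases hx with ⟨i, hi, rfl⟩
    omega
  have hodd : ∀ x ∈ Finset.range (M + 1), x ∉ (Finset.range (M / 2 + 1)).image (fun i => 2 * i) →
      (M.choose x) • (if Even x then (-1 : ℤ) ^ (x / 2) * eulerZigzag (M - x) else 0) = 0 := by
    intro x hx hnx
    rw [if_neg, smul_zero]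
    intro hex
    rcases hex with ⟨i, hi⟩
    apply hnx
    simp only [Finset.mem_image, Finset.mem_range] at hx ⊢
    exact ⟨i, by omega, by omega⟩
  rw [← Finset.sum_subset himg hodd] at hzero
  rw [Finset.sum_image (by intro a _ b _ h; simp only at h; omega)] at hzero
  rw [← hzero]
  refine Finset.sum_congr rfl fun i hi => ?_
  have hev : Even (2 * i) := ⟨i, by ring⟩
  rw [if_pos hev]
  have h2 : 2 * i / 2 = i := by omega
  rw [h2, nsmul_eq_mul]
  ring

lemma zig_sum_zero' (T : ℕ) (hT2 : 2 ≤ T) (hTE : Even T) :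
    ∑ i ∈ Finset.range (T / 2 + 1),
      (-1 : ℤ) ^ i * (T.choose (2 * i)) * eulerZigzag (2 * i) = 0 := by
  have h0 := zig_sum_zero (M := T) hT2 hTE
  rw [← Finset.sum_range_reflect] at h0
  have hTeven2 : T % 2 = 0 := Nat.even_iff.mp hTE
  have hstep : ∀ i ∈ Finset.range (T / 2 + 1),
      (-1 : ℤ) ^ (T / 2 + 1 - 1 - i) * (T.choose (2 * (T / 2 + 1 - 1 - i))) *
        eulerZigzag (T - 2 * (T / 2 + 1 - 1 - i)) =
      (-1) ^ (T / 2 - i) * (T.choose (2 * i)) * eulerZigzag (2 * i) := by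
    intro i hi
    simp only [Finset.mem_range] at hi
    have hi' : i ≤ T / 2 := by omega
    have e1 : T / 2 + 1 - 1 - i = T / 2 - i := by omega
    have e2 : 2 * (T / 2 - i) = T - 2 * i := by omega
    have e3 : T - (T - 2 * i) = 2 * i := by omega
    have e4 : T.choose (T - 2 * i) = T.choose (2 * i) :=
      Nat.choose_symm (by omega)
    rw [e1, e2, e3, e4]
  rw [Finset.sum_congr rfl hstep] at h0
  have hsign : ∀ i ∈ Finset.range (T / 2 + 1),
      (-1 : ℤ) ^ i * (T.choose (2 * i)) * eulerZigzag (2 * i) =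
      (-1 : ℤ) ^ (T / 2) *
        ((-1) ^ (T / 2 - i) * (T.choose (2 * i)) * eulerZigzag (2 * i)) := by
    intro i hi
    simp only [Finset.mem_range] at hi
    have h1 : (-1 : ℤ) ^ (T / 2 - i) * (-1) ^ i = (-1) ^ (T / 2) := by
      rw [← pow_add]; congr 1; omega
    have h2 : (-1 : ℤ) ^ (T / 2 - i) * (-1) ^ (T / 2 - i) = 1 := by
      rw [← pow_add, ← two_mul]
      exact Even.neg_one_pow ⟨T / 2 - i, by ring⟩
    calc (-1 : ℤ) ^ i * (T.choose (2 * i)) * eulerZigzag (2 * i)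
        = ((-1 : ℤ) ^ (T / 2 - i) * (-1) ^ (T / 2 - i)) *
          ((-1) ^ i * (T.choose (2 * i)) * eulerZigzag (2 * i)) := by rw [h2]; ring
      _ = (-1 : ℤ) ^ (T / 2) *
          ((-1) ^ (T / 2 - i) * (T.choose (2 * i)) * eulerZigzag (2 * i)) := by
          rw [← h1]; ring
  rw [Finset.sum_congr rfl hsign, ← Finset.mul_sum, h0, mul_zero]

/-- The sequence appearing as the `b`-number of stars with the center included. -/
noncomputable def fS (t : ℕ) : ℤ :=
  if Even t then (-1) ^ (t / 2 + 1) * eulerZigzag t else 0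

lemma fS_row (T : ℕ) (hTE : Even T) :
    ∑ j ∈ Finset.range (T + 1), (T.choose j) • fS j = if T = 0 then -1 else 0 := by
  rcases Nat.eq_zero_or_pos T with rfl | hTpos
  · simp [fS, eulerZigzag_zero]
  have hT2 : 2 ≤ T := by
    rcases hTE with ⟨c, hc⟩; omega
  rw [if_neg (by omega)]
  have himg : (Finset.range (T / 2 + 1)).image (fun i => 2 * i) ⊆ Finset.range (T + 1) := by
    intro x hx
    simp only [Finset.mem_image, Finset.mem_range] at hx ⊢
    rcases hx with ⟨i, hi, rfl⟩
    omega
  have hodd : ∀ x ∈ Finset.range (T + 1), x ∉ (Finset.range (T / 2 + 1)).image (fun i => 2 * i) →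
      (T.choose x) • fS x = 0 := by
    intro x hx hnx
    rw [fS, if_neg, smul_zero]
    intro hex
    rcases hex with ⟨i, hi⟩
    apply hnx
    simp only [Finset.mem_image, Finset.mem_range] at hx ⊢
    exact ⟨i, by omega, by omega⟩
  rw [← Finset.sum_subset himg hodd,
    Finset.sum_image (by intro a _ b _ h; simp only at h; omega)]
  have hstep : ∀ i ∈ Finset.range (T / 2 + 1), (T.choose (2 * i)) • fS (2 * i) =
      -((-1 : ℤ) ^ i * (T.choose (2 * i)) * eulerZigzag (2 * i)) := by
    intro i hi
    rw [fS, if_pos ⟨i, by ring⟩]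
    have h2 : 2 * i / 2 = i := by omega
    rw [h2, nsmul_eq_mul, pow_succ]
    ring
  rw [Finset.sum_congr rfl hstep, Finset.sum_neg_distrib, zig_sum_zero' T hT2 hTE, neg_zero]


variable {N : ℕ}

local notation "V" => (Fin 1 ⊕ Fin N)
local notation "G" => completeBipartiteGraph (Fin 1) (Fin N)

lemma mem_right {s : Finset V} (hc : Sum.inl 0 ∉ s) {v : V} (hv : v ∈ s) : v.isRight := by
  rcases v with x | y
  · exfalso
    apply hc
    have hx : x = 0 := Subsingleton.elim _ _
    rwa [hx] at hv
  · rfl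

lemma induce_eq_bot {s : Finset V} (hc : Sum.inl 0 ∉ s) :
    (completeBipartiteGraph (Fin 1) (Fin N)).induce (s : Set V) = ⊥ := by
  ext ⟨a, ha⟩ ⟨b, hb⟩
  simp only [SimpleGraph.comap_adj, Function.Embedding.coe_subtype,
    completeBipartiteGraph_adj, SimpleGraph.bot_adj, iff_false]
  have ha' := mem_right hc (by simpa using ha)
  have hb' := mem_right hc (by simpa using hb)
  rintro (⟨h1, h2⟩ | ⟨h1, h2⟩)
  · rcases a with a | a
    · simp at ha'
    · simp at h1
  · rcases b with b | b
    · simp at hb'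
    · simp at h2

lemma isOddGraph_bot {W : Type*} : (⊥ : SimpleGraph W).IsOddGraph := by
  intro cc
  induction cc using SimpleGraph.ConnectedComponent.ind with
  | _ v =>
    have hsupp : (SimpleGraph.connectedComponentMk ⊥ v).supp = {v} := by
      ext w
      simp only [SimpleGraph.ConnectedComponent.mem_supp_iff, Set.mem_singleton_iff]
      rw [SimpleGraph.ConnectedComponent.eq]
      exact SimpleGraph.reachable_bot
    rw [hsupp]
    have : Nat.card ({v} : Set W) = 1 := by
      rw [Nat.card_coe_set_eq, Set.ncard_singleton]
    rw [this]
    exact odd_one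

lemma induce_preconnected {s : Finset V} (hc : Sum.inl 0 ∈ s) :
    ((completeBipartiteGraph (Fin 1) (Fin N)).induce (s : Set V)).Preconnected := by
  set c : ↥(s : Set V) := ⟨Sum.inl 0, by simpa using hc⟩ with hcdef
  have key : ∀ u : ↥(s : Set V), u = c ∨
      ((completeBipartiteGraph (Fin 1) (Fin N)).induce (s : Set V)).Adj u c := by
    rintro ⟨u, hu⟩
    rcases u with x | y
    · left
      apply Subtype.ext
      simp only [hcdef]
      congr
      exact Subsingleton.elim _ _
    · right
      simp only [SimpleGraph.comap_adj, Function.Embedding.coe_subtype,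
        completeBipartiteGraph_adj, hcdef]
      simp
  intro u v
  have hu := key u
  have hv := key v
  have ru : ((completeBipartiteGraph (Fin 1) (Fin N)).induce (s : Set V)).Reachable u c := by
    rcases hu with rfl | h
    · exact SimpleGraph.Reachable.refl _
    · exact h.reachable
  have rv : ((completeBipartiteGraph (Fin 1) (Fin N)).induce (s : Set V)).Reachable v c := by
    rcases hv with rfl | h
    · exact SimpleGraph.Reachable.refl _
    · exact h.reachable
  exact ru.trans rv.symm

lemma supp_card {s : Finset V} (hc : Sum.inl 0 ∈ s)
    (cc : ((completeBipartiteGraph (Fin 1) (Fin N)).induce (s : Set V)).ConnectedComponent) :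
    Nat.card cc.supp = s.card := by
  have hpre := induce_preconnected hc
  induction cc using SimpleGraph.ConnectedComponent.ind with
  | _ v =>
    have hsupp : (SimpleGraph.connectedComponentMk
        ((completeBipartiteGraph (Fin 1) (Fin N)).induce (s : Set V)) v).supp = Set.univ := by
      ext w
      simp only [SimpleGraph.ConnectedComponent.mem_supp_iff, Set.mem_univ, iff_true]
      rw [SimpleGraph.ConnectedComponent.eq]
      exact hpre w v
    rw [hsupp]
    rw [Nat.card_coe_set_eq, Set.ncard_univ, Nat.card_coe_set_eq,
      Set.ncard_coe_finset]

lemma isOdd_iff {s : Finset V} (hc : Sum.inl 0 ∈ s) :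
    ((completeBipartiteGraph (Fin 1) (Fin N)).induce (s : Set V)).IsOddGraph ↔ Odd s.card := by
  constructor
  · intro h
    have := h (SimpleGraph.connectedComponentMk _ ⟨Sum.inl 0, by simpa using hc⟩)
    rwa [supp_card hc] at this
  · intro h cc
    rw [supp_card hc]
    exact h

lemma bNum_star : ∀ s : Finset V,
    bNum (completeBipartiteGraph (Fin 1) (Fin N)) s =
      if Sum.inl 0 ∈ s then fS (s.card - 1) else (-1) ^ s.card := by
  intro s
  induction s using Finset.strongInductionOn with
  | _ s ih =>
  by_cases hs0 : s = ∅
  · subst hs0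
    rw [bNum]
    simp
  by_cases hc : Sum.inl 0 ∈ s
  · -- center in s
    rcases Nat.even_or_odd s.card with hev | hod
    · -- even: not an odd graph, bNum = 0
      have hnotodd : ¬ ((completeBipartiteGraph (Fin 1) (Fin N)).induce
          (s : Set V)).IsOddGraph := by
        rw [isOdd_iff hc]
        exact (Nat.not_odd_iff_even.mpr hev)
      rw [bNum, if_neg hs0, if_neg hnotodd, if_pos hc, fS, if_neg]
      have h1 : 1 ≤ s.card := Finset.card_pos.mpr ⟨_, hc⟩
      rcases hev with ⟨k, hk⟩
      rintro ⟨m, hm⟩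
      omega
    · -- odd: recursion
      have hoddg : ((completeBipartiteGraph (Fin 1) (Fin N)).induce
          (s : Set V)).IsOddGraph := (isOdd_iff hc).mpr hod
      rw [bNum, if_neg hs0, if_pos hoddg, if_pos hc, Finset.sum_attach,
        Finset.filter_congr_decidable, neg_eq_iff_eq_neg]
      have hsum : ∀ t ∈ s.powerset.filter (· ≠ s),
          bNum (completeBipartiteGraph (Fin 1) (Fin N)) t =
            (if Sum.inl 0 ∈ t then fS (t.card - 1) else (-1) ^ t.card) := by
        intro t ht
        simp only [Finset.mem_filter, Finset.mem_powerset] at ht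
        exact ih t (lt_of_le_of_ne ht.1 ht.2)
      -- the total sum over the powerset vanishes
      have hT : Even (s.card - 1) := by
        rcases hod with ⟨m, hm⟩
        exact ⟨m, by omega⟩
      set s' := s.erase (Sum.inl 0) with hs'
      have hcs' : (Sum.inl 0 : V) ∉ s' := Finset.notMem_erase _ _
      have hins : insert (Sum.inl 0 : V) s' = s := Finset.insert_erase hc
      have hcard' : s'.card = s.card - 1 := Finset.card_erase_of_mem hc
      have htotal : ∑ t ∈ s.powerset,
          (if Sum.inl 0 ∈ t then fS (t.card - 1) else (-1 : ℤ) ^ t.card) = 0 := by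
        rw [← hins, Finset.sum_powerset_insert hcs']
        have hpart1 : ∑ t ∈ s'.powerset,
            (if Sum.inl 0 ∈ t then fS (t.card - 1) else (-1 : ℤ) ^ t.card) =
            ∑ t ∈ s'.powerset, (-1 : ℤ) ^ t.card := by
          refine Finset.sum_congr rfl fun t ht => ?_
          rw [if_neg]
          intro hmem
          exact hcs' (Finset.mem_powerset.mp ht hmem)
        have hpart2 : ∑ t ∈ s'.powerset,
            (if Sum.inl 0 ∈ insert (Sum.inl 0 : V) t then fS ((insert (Sum.inl 0 : V) t).card - 1)
              else (-1 : ℤ) ^ (insert (Sum.inl 0 : V) t).card) =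
            ∑ t ∈ s'.powerset, fS t.card := by
          refine Finset.sum_congr rfl fun t ht => ?_
          rw [if_pos (Finset.mem_insert_self _ _)]
          congr 1
          rw [Finset.card_insert_of_notMem
            (fun hmem => hcs' (Finset.mem_powerset.mp ht hmem))]
          omega
        rw [hpart1, hpart2]
        have hgrp : ∑ t ∈ s'.powerset, fS t.card =
            ∑ j ∈ Finset.range (s'.card + 1), (s'.card.choose j) • fS j := by
          rw [Finset.sum_powerset]
          refine Finset.sum_congr rfl fun j _ => ?_
          rw [Finset.sum_powersetCard j s' (fun c => fS c)]
        rw [hgrp, hcard', fS_row _ hT, Finset.sum_powerset_neg_one_pow_card]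
        by_cases hse : s' = ∅
        · rw [if_pos hse, if_pos (by rw [← hcard', Finset.card_eq_zero.mpr hse])]
          ring
        · rw [if_neg hse, if_neg (by
            intro hzero
            apply hse
            rw [← Finset.card_eq_zero, hcard', hzero])]
          ring
      refine (Finset.sum_congr rfl hsum).trans ?_
      rw [Finset.filter_ne', Finset.sum_erase_eq_sub (Finset.mem_powerset_self s),
        htotal, if_pos hc]
      ring
  · -- center not in s: the empty graph on s
    have hbot := induce_eq_bot (N := N) hc
    have hodd : ((completeBipartiteGraph (Fin 1) (Fin N)).induce (s : Set V)).IsOddGraph := by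
      rw [hbot]; exact isOddGraph_bot
    rw [bNum, if_neg hs0, if_pos hodd, if_neg hc, Finset.sum_attach,
      Finset.filter_congr_decidable, neg_eq_iff_eq_neg]
    have hsum : ∀ t ∈ s.powerset.filter (· ≠ s),
        bNum (completeBipartiteGraph (Fin 1) (Fin N)) t = (-1) ^ t.card := by
      intro t ht
      simp only [Finset.mem_filter, Finset.mem_powerset] at ht
      rw [ih t (lt_of_le_of_ne ht.1 ht.2), if_neg (fun hm => hc (ht.1 hm))]
    refine (Finset.sum_congr rfl hsum).trans ?_
    rw [Finset.filter_ne', Finset.sum_erase_eq_sub (Finset.mem_powerset_self s),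
      Finset.sum_powerset_neg_one_pow_card, if_neg hs0]
    ring


end StarB

/-- for odd `n`, `b(K_{1,n-1}) = (-1)^{(n+1)/2} ⬝ A_{n-1}`, where
`K_{1,n-1}` is the star with one center and `n-1` leaves. -/
theorem bNumber_starGraph (n : ℕ) (hn : Odd n) :
    bNumber (completeBipartiteGraph (Fin 1) (Fin (n - 1)))
      = (-1) ^ ((n + 1) / 2) * (eulerZigzag (n - 1) : ℤ) := by
  obtain ⟨m, rfl⟩ := hn
  rw [bNumber, StarB.bNum_star, if_pos (Finset.mem_univ _)]
  have hcard : (Finset.univ : Finset (Fin 1 ⊕ Fin (2 * m + 1 - 1))).card = 1 + 2 * m := by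
    simp
  rw [hcard]
  have h1 : 1 + 2 * m - 1 = 2 * m := by omega
  rw [h1, StarB.fS, if_pos ⟨m, by ring⟩]
  have h2 : 2 * m / 2 + 1 = (2 * m + 1 + 1) / 2 := by omega
  have h3 : 2 * m + 1 - 1 = 2 * m := by omega
  rw [h2, h3]
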